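/- Let X be a complex separable Banach space and let T ∈ B(X) be invertible and transitive (no nontrivial closed invariant subspace). Let x₀ ∈ X be nonzero with 𝔑 ≠ X, where 𝔑 is the closed linear span of {xₙ : n ≥ 1} with xₙ = T^{−n}x₀, and let x₁* ∈ X* satisfy ⟨x₁*, xₙ⟩ = δ₁ₙ for all n ≥ 1. Then 𝔑 is invariant under T⁻¹; the operator V : 𝔑 → X defined by Vx = Tx − ⟨x₁*, x⟩x₀ maps 𝔑 into 𝔑; and with U = T⁻¹|_𝔑 ∈ B(𝔑) one has: (i) ker U = {0} and ran U equals the closed linear span of {xₖ : k ≥ 2}; (ii) ker V = ℂx₁ and ran V = 𝔑; (iii) V∘U = I on 𝔑; (iv) x₁ is a cyclic vector of U, i.e., the closed linear span of {Uᵏx₁ : k ≥ 0} equals 𝔑. -/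

import Mathlib

/-- `𝔑₋ₖ`: the closed linear span of `{S^n x₀ : n ≥ k}` (here `S = T⁻¹`). -/
def closedSpanOrbitFrom {X : Type*} [NormedAddCommGroup X] [NormedSpace ℂ X]
    (S : X →L[ℂ] X) (x₀ : X) (k : ℕ) : Submodule ℂ X :=
  (Submodule.span ℂ {y : X | ∃ n : ℕ, k ≤ n ∧ y = (S ^ n) x₀}).topologicalClosure

/-- `T` is transitive: it has no nontrivial closed invariant subspace. -/
def IsTransitiveOp {X : Type*} [NormedAddCommGroup X] [NormedSpace ℂ X]
    (T : X →L[ℂ] X) : Prop :=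
  ∀ Y : Submodule ℂ X, IsClosed (Y : Set X) → (∀ x ∈ Y, T x ∈ Y) → Y = ⊥ ∨ Y = ⊤

/-!
`S = T⁻¹` shifts the generators `xₙ = Sⁿx₀` forward, `T` shifts them back, and `x₁*`
kills every `xₙ` with `n ≥ 2`. Each claim is therefore an identity or a membership that is
checked on the generators and extends to their closed span by linearity and continuity;
the rest follows from `T S = S T = I`.
-/

open Function

section ClosedSpanOrbit

variable {X : Type*} [NormedAddCommGroup X] [NormedSpace ℂ X] (S : X →L[ℂ] X) (x₀ : X)

theorem pow_apply_mem_closedSpanOrbitFrom {k n : ℕ} (h : k ≤ n) :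
    (S ^ n) x₀ ∈ closedSpanOrbitFrom S x₀ k :=
  Submodule.le_topologicalClosure _ (Submodule.subset_span ⟨n, h, rfl⟩)

theorem closedSpanOrbitFrom_le_comap {Y : Type*} [NormedAddCommGroup Y] [NormedSpace ℂ Y]
    (g : X →L[ℂ] Y) {M : Submodule ℂ Y} (hM : IsClosed (M : Set Y)) {k : ℕ}
    (hg : ∀ n, k ≤ n → g ((S ^ n) x₀) ∈ M) :
    closedSpanOrbitFrom S x₀ k ≤ M.comap (g : X →ₗ[ℂ] Y) :=
  Submodule.topologicalClosure_minimal _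
    (Submodule.span_le.mpr (by rintro _ ⟨n, hn, rfl⟩; exact hg n hn))
    (hM.preimage g.continuous)

theorem closedSpanOrbitFrom_antitone : Antitone (closedSpanOrbitFrom S x₀) :=
  fun _ _ hkl => Submodule.topologicalClosure_mono (Submodule.span_mono
    (by rintro _ ⟨n, hn, rfl⟩; exact ⟨n, hkl.trans hn, rfl⟩))

theorem closedSpanOrbitFrom_eq_closure_span_range (k : ℕ) :
    closedSpanOrbitFrom S x₀ k =
      (Submodule.span ℂ (Set.range fun n : ℕ => (S ^ (n + k)) x₀)).topologicalClosure := by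
  have hgen : {y : X | ∃ n : ℕ, k ≤ n ∧ y = (S ^ n) x₀} =
      Set.range fun n : ℕ => (S ^ (n + k)) x₀ := by
    ext y
    constructor
    · rintro ⟨n, hn, rfl⟩
      exact ⟨n - k, by simp only [Nat.sub_add_cancel hn]⟩
    · rintro ⟨n, rfl⟩
      exact ⟨n + k, by omega, rfl⟩
  rw [closedSpanOrbitFrom, hgen]

theorem apply_eq_zero_of_mem_closedSpanOrbitFrom {Y : Type*} [NormedAddCommGroup Y]
    [NormedSpace ℂ Y] (g : X →L[ℂ] Y) {k : ℕ} (hg : ∀ n, k ≤ n → g ((S ^ n) x₀) = 0)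
    {x : X} (hx : x ∈ closedSpanOrbitFrom S x₀ k) : g x = 0 :=
  closedSpanOrbitFrom_le_comap S x₀ g (M := ⊥) (by simp) hg hx

theorem apply_mem_closedSpanOrbitFrom_succ {k : ℕ} {x : X}
    (hx : x ∈ closedSpanOrbitFrom S x₀ k) : S x ∈ closedSpanOrbitFrom S x₀ (k + 1) := by
  refine closedSpanOrbitFrom_le_comap S x₀ S (Submodule.isClosed_topologicalClosure _)
    (fun n hn => ?_) hx
  rw [← mul_apply_eq_comp, ← pow_succ']
  exact pow_apply_mem_closedSpanOrbitFrom S x₀ (by omega)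

theorem apply_mem_closedSpanOrbitFrom {k : ℕ} {x : X} (hx : x ∈ closedSpanOrbitFrom S x₀ k) :
    S x ∈ closedSpanOrbitFrom S x₀ k :=
  closedSpanOrbitFrom_antitone S x₀ k.le_succ (apply_mem_closedSpanOrbitFrom_succ S x₀ hx)

variable {S x₀} {T : X →L[ℂ] X}

theorem apply_mem_closedSpanOrbitFrom_of_succ (hTS : LeftInverse T S) {k : ℕ} {x : X}
    (hx : x ∈ closedSpanOrbitFrom S x₀ (k + 1)) : T x ∈ closedSpanOrbitFrom S x₀ k := by
  refine closedSpanOrbitFrom_le_comap S x₀ T (Submodule.isClosed_topologicalClosure _)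
    (fun n hn => ?_) hx
  obtain ⟨m, rfl⟩ : ∃ m, n = m + 1 := ⟨n - 1, by omega⟩
  rw [pow_succ', mul_apply_eq_comp, hTS]
  exact pow_apply_mem_closedSpanOrbitFrom S x₀ (by omega)

theorem image_closedSpanOrbitFrom (hTS : LeftInverse T S) (hST : LeftInverse S T) (k : ℕ) :
    S '' (closedSpanOrbitFrom S x₀ k : Set X) = closedSpanOrbitFrom S x₀ (k + 1) := by
  refine Set.Subset.antisymm ?_ fun y hy => ⟨T y, ?_, hST y⟩
  · rintro _ ⟨x, hx, rfl⟩
    exact apply_mem_closedSpanOrbitFrom_succ S x₀ hx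
  · exact apply_mem_closedSpanOrbitFrom_of_succ hTS hy

end ClosedSpanOrbit

section RankOnePerturbation

variable {X : Type*} [NormedAddCommGroup X] [NormedSpace ℂ X] {T S : X →L[ℂ] X} {x₀ : X}
  {f : X →L[ℂ] ℂ}

theorem sub_smul_eq_zero_iff (hTS : LeftInverse T S) (hST : LeftInverse S T)
    (hf₁ : f (S x₀) = 1) (x : X) : T x - f x • x₀ = 0 ↔ ∃ c : ℂ, x = c • S x₀ := by
  constructor
  · intro h
    refine ⟨f x, ?_⟩
    calc x = S (T x) := (hST x).symm
      _ = f x • S x₀ := by rw [sub_eq_zero.mp h, map_smul]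
  · rintro ⟨c, rfl⟩
    rw [map_smul, map_smul, hTS, hf₁, smul_eq_mul, mul_one, sub_self]

theorem sub_smul_mem_closedSpanOrbitFrom_one (hTS : LeftInverse T S) (hf₁ : f (S x₀) = 1)
    (hf₂ : ∀ n, 2 ≤ n → f ((S ^ n) x₀) = 0) {x : X} (hx : x ∈ closedSpanOrbitFrom S x₀ 1) :
    T x - f x • x₀ ∈ closedSpanOrbitFrom S x₀ 1 := by
  refine closedSpanOrbitFrom_le_comap S x₀ (T - f.smulRight x₀)
    (Submodule.isClosed_topologicalClosure _) (fun n hn => ?_) hx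
  change T ((S ^ n) x₀) - f ((S ^ n) x₀) • x₀ ∈ closedSpanOrbitFrom S x₀ 1
  obtain rfl | hn₂ := hn.eq_or_lt
  · rw [pow_one, hf₁, hTS, one_smul, sub_self]
    exact Submodule.zero_mem _
  · rw [hf₂ n hn₂, zero_smul, sub_zero]
    exact apply_mem_closedSpanOrbitFrom_of_succ hTS
      (pow_apply_mem_closedSpanOrbitFrom S x₀ hn₂)

theorem sub_smul_apply_eq_self (hTS : LeftInverse T S)
    (hf₂ : ∀ n, 2 ≤ n → f ((S ^ n) x₀) = 0)
    {x : X} (hx : x ∈ closedSpanOrbitFrom S x₀ 1) : T (S x) - f (S x) • x₀ = x := by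
  rw [hTS, apply_eq_zero_of_mem_closedSpanOrbitFrom S x₀ f hf₂
    (apply_mem_closedSpanOrbitFrom_succ S x₀ hx), zero_smul, sub_zero]

theorem image_sub_smul_closedSpanOrbitFrom_one (hTS : LeftInverse T S) (hf₁ : f (S x₀) = 1)
    (hf₂ : ∀ n, 2 ≤ n → f ((S ^ n) x₀) = 0) :
    (fun x => T x - f x • x₀) '' (closedSpanOrbitFrom S x₀ 1 : Set X) =
      closedSpanOrbitFrom S x₀ 1 := by
  refine Set.Subset.antisymm ?_ fun y hy =>
    ⟨S y, apply_mem_closedSpanOrbitFrom S x₀ hy, sub_smul_apply_eq_self hTS hf₂ hy⟩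
  rintro _ ⟨x, hx, rfl⟩
  exact sub_smul_mem_closedSpanOrbitFrom_one hTS hf₁ hf₂ hx

end RankOnePerturbation

theorem four_operators_basic_properties_general
    (X : Type*) [NormedAddCommGroup X] [NormedSpace ℂ X]
    (T S : X →L[ℂ] X)
    (hTS : T.comp S = ContinuousLinearMap.id ℂ X)
    (hST : S.comp T = ContinuousLinearMap.id ℂ X)
    (x₀ : X)
    (f : X →L[ℂ] ℂ)
    (hf : ∀ n : ℕ, 1 ≤ n → f ((S ^ n) x₀) = if n = 1 then 1 else 0) :
    -- 𝔑 is invariant under T⁻¹ = S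
    (∀ x ∈ closedSpanOrbitFrom S x₀ 1, S x ∈ closedSpanOrbitFrom S x₀ 1) ∧
    -- V maps 𝔑 into 𝔑
    (∀ x ∈ closedSpanOrbitFrom S x₀ 1, T x - f x • x₀ ∈ closedSpanOrbitFrom S x₀ 1) ∧
    -- (i) ker U = {0}
    (∀ x ∈ closedSpanOrbitFrom S x₀ 1, S x = 0 → x = 0) ∧
    -- (i) ran U = [xₖ : k ≥ 2]
    (S '' ((closedSpanOrbitFrom S x₀ 1 : Submodule ℂ X) : Set X) =
      ((closedSpanOrbitFrom S x₀ 2 : Submodule ℂ X) : Set X)) ∧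
    -- (ii) ker V = ℂ x₁
    (∀ x ∈ closedSpanOrbitFrom S x₀ 1,
      (T x - f x • x₀ = 0 ↔ ∃ c : ℂ, x = c • S x₀)) ∧
    -- (ii) ran V = 𝔑
    ((fun x => T x - f x • x₀) '' ((closedSpanOrbitFrom S x₀ 1 : Submodule ℂ X) : Set X) =
      ((closedSpanOrbitFrom S x₀ 1 : Submodule ℂ X) : Set X)) ∧
    -- (iii) V ∘ U = I on 𝔑
    (∀ x ∈ closedSpanOrbitFrom S x₀ 1, T (S x) - f (S x) • x₀ = x) ∧
    -- (iv) x₁ is a cyclic vector of U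
    ((Submodule.span ℂ (Set.range fun k : ℕ => (S ^ (k + 1)) x₀)).topologicalClosure =
      closedSpanOrbitFrom S x₀ 1) := by
  have hTS' : LeftInverse T S := fun x => DFunLike.congr_fun hTS x
  have hST' : LeftInverse S T := fun x => DFunLike.congr_fun hST x
  have hf₁ : f (S x₀) = 1 := by simpa using hf 1 le_rfl
  have hf₂ : ∀ n, 2 ≤ n → f ((S ^ n) x₀) = 0 := fun n hn => by
    simpa [show n ≠ 1 by omega] using hf n (by omega)
  refine ⟨fun x => apply_mem_closedSpanOrbitFrom S x₀,
    fun x => sub_smul_mem_closedSpanOrbitFrom_one hTS' hf₁ hf₂,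
    fun x _ hSx => by rw [← hTS' x, hSx, map_zero],
    image_closedSpanOrbitFrom hTS' hST' 1,
    fun x _ => sub_smul_eq_zero_iff hTS' hST' hf₁ x,
    image_sub_smul_closedSpanOrbitFrom_one hTS' hf₁ hf₂,
    fun x => sub_smul_apply_eq_self hTS' hf₂,
    (closedSpanOrbitFrom_eq_closure_span_range S x₀ 1).symm⟩

/-- Let `X` be a complex separable Banach space, `T ∈ B(X)` invertible
(with inverse `S`) and transitive, `x₀ ≠ 0` with `𝔑 ≠ X` where `𝔑 = [xₙ : n ≥ 1]`,
`xₙ = T^{−n}x₀ = Sⁿx₀`, and `x₁* ∈ X*` with `⟨x₁*, xₙ⟩ = δ₁ₙ` for `n ≥ 1`.  Then `𝔑` is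
invariant under `T⁻¹`; the map `V x = T x − ⟨x₁*, x⟩ x₀` maps `𝔑` into `𝔑`; and for
`U = T⁻¹|_𝔑`: (i) `ker U = 0` and `ran U = [xₖ : k ≥ 2]`; (ii) `ker V = ℂ x₁` and
`ran V = 𝔑`; (iii) `V ∘ U = I` on `𝔑`; (iv) `x₁` is a cyclic vector of `U`. -/
theorem four_operators_basic_properties
    (X : Type*) [NormedAddCommGroup X] [NormedSpace ℂ X] [CompleteSpace X]
    [TopologicalSpace.SeparableSpace X]
    (T S : X →L[ℂ] X)
    (hTS : T.comp S = ContinuousLinearMap.id ℂ X)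
    (hST : S.comp T = ContinuousLinearMap.id ℂ X)
    (htrans : IsTransitiveOp T)
    (x₀ : X) (hx₀ : x₀ ≠ 0)
    (hN : closedSpanOrbitFrom S x₀ 1 ≠ ⊤)
    (f : X →L[ℂ] ℂ)
    (hf : ∀ n : ℕ, 1 ≤ n → f ((S ^ n) x₀) = if n = 1 then 1 else 0) :
    -- 𝔑 is invariant under T⁻¹ = S
    (∀ x ∈ closedSpanOrbitFrom S x₀ 1, S x ∈ closedSpanOrbitFrom S x₀ 1) ∧
    -- V maps 𝔑 into 𝔑
    (∀ x ∈ closedSpanOrbitFrom S x₀ 1, T x - f x • x₀ ∈ closedSpanOrbitFrom S x₀ 1) ∧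
    -- (i) ker U = {0}
    (∀ x ∈ closedSpanOrbitFrom S x₀ 1, S x = 0 → x = 0) ∧
    -- (i) ran U = [xₖ : k ≥ 2]
    (S '' ((closedSpanOrbitFrom S x₀ 1 : Submodule ℂ X) : Set X) =
      ((closedSpanOrbitFrom S x₀ 2 : Submodule ℂ X) : Set X)) ∧
    -- (ii) ker V = ℂ x₁
    (∀ x ∈ closedSpanOrbitFrom S x₀ 1,
      (T x - f x • x₀ = 0 ↔ ∃ c : ℂ, x = c • S x₀)) ∧
    -- (ii) ran V = 𝔑
    ((fun x => T x - f x • x₀) '' ((closedSpanOrbitFrom S x₀ 1 : Submodule ℂ X) : Set X) =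
      ((closedSpanOrbitFrom S x₀ 1 : Submodule ℂ X) : Set X)) ∧
    -- (iii) V ∘ U = I on 𝔑
    (∀ x ∈ closedSpanOrbitFrom S x₀ 1, T (S x) - f (S x) • x₀ = x) ∧
    -- (iv) x₁ is a cyclic vector of U
    ((Submodule.span ℂ (Set.range fun k : ℕ => (S ^ (k + 1)) x₀)).topologicalClosure =
      closedSpanOrbitFrom S x₀ 1) :=
  four_operators_basic_properties_general X T S hTS hST x₀ f hf
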